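/- With the discrete bracket {·,·} and Hamiltonian H(X,V,E,B) = ½Σₛ ωₛ|Vₛ|² + ½EᵀWe E + ½BᵀWb B as above, the equation Ḟ = {F, H} applied to the coordinate functions F = Xₛ, Vₛ, E, B reproduces exactly the semi-discrete Vlasov-Maxwell system: Ẋₛ = Vₛ, V̇ₛ = WeS(Xₛ)ᵀE + Vₛ × (WbS(Xₛ)ᵀB), Ė = We⁻¹(KB − Σₛ ωₛ WeS(Xₛ)Vₛ), Ḃ = −Wb⁻¹KᵀE. -/

import Mathlib

open Matrix

abbrev VMState (N Ne Nb : ℕ) :=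
  (Fin N → Fin 3 → ℝ) × (Fin N → Fin 3 → ℝ) × (Fin Ne → ℝ) × (Fin Nb → ℝ)

noncomputable def pX {N Ne Nb : ℕ} (F : VMState N Ne Nb → ℝ) (z : VMState N Ne Nb)
    (s : Fin N) : Fin 3 → ℝ :=
  fun i => fderiv ℝ F z ⟨Pi.single s (Pi.single i 1), 0, 0, 0⟩

noncomputable def pV {N Ne Nb : ℕ} (F : VMState N Ne Nb → ℝ) (z : VMState N Ne Nb)
    (s : Fin N) : Fin 3 → ℝ :=
  fun i => fderiv ℝ F z ⟨0, Pi.single s (Pi.single i 1), 0, 0⟩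

noncomputable def pE {N Ne Nb : ℕ} (F : VMState N Ne Nb → ℝ) (z : VMState N Ne Nb) :
    Fin Ne → ℝ :=
  fun i => fderiv ℝ F z ⟨0, 0, Pi.single i 1, 0⟩

noncomputable def pB {N Ne Nb : ℕ} (F : VMState N Ne Nb → ℝ) (z : VMState N Ne Nb) :
    Fin Nb → ℝ :=
  fun i => fderiv ℝ F z ⟨0, 0, 0, Pi.single i 1⟩

noncomputable def discreteBracket {N Ne Nb : ℕ} (ω : Fin N → ℝ)
    (We : Matrix (Fin Ne) (Fin Ne) ℝ) (Wb : Matrix (Fin Nb) (Fin Nb) ℝ)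
    (K : Matrix (Fin Ne) (Fin Nb) ℝ)
    (WeS : (Fin 3 → ℝ) → Matrix (Fin Ne) (Fin 3) ℝ)
    (WbS : (Fin 3 → ℝ) → Matrix (Fin Nb) (Fin 3) ℝ)
    (F G : VMState N Ne Nb → ℝ) (z : VMState N Ne Nb) : ℝ :=
  (∑ s, (1 / ω s) * (pX F z s ⬝ᵥ pV G z s - pX G z s ⬝ᵥ pV F z s))
  + (pE F z ⬝ᵥ (We⁻¹ * K * Wb⁻¹).mulVec (pB G z))
  - (pE G z ⬝ᵥ (We⁻¹ * K * Wb⁻¹).mulVec (pB F z))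
  + (∑ s, ((pE G z ⬝ᵥ (We⁻¹ * WeS (z.1 s)).mulVec (pV F z s))
      - (pE F z ⬝ᵥ (We⁻¹ * WeS (z.1 s)).mulVec (pV G z s))))
  + (∑ s, (1 / ω s) *
      (z.2.2.2 ⬝ᵥ (WbS (z.1 s)).mulVec (crossProduct (pV F z s) (pV G z s))))

/-- The discrete Hamiltonian. -/
noncomputable def discreteH {N Ne Nb : ℕ} (ω : Fin N → ℝ)
    (We : Matrix (Fin Ne) (Fin Ne) ℝ) (Wb : Matrix (Fin Nb) (Fin Nb) ℝ)
    (z : VMState N Ne Nb) : ℝ :=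
  (1/2) * ∑ s, ω s * (z.2.1 s ⬝ᵥ z.2.1 s)
  + (1/2) * (z.2.2.1 ⬝ᵥ We.mulVec z.2.2.1)
  + (1/2) * (z.2.2.2 ⬝ᵥ Wb.mulVec z.2.2.2)
section AuxCLM
variable {N Ne Nb : ℕ}

noncomputable def cX (s : Fin N) (i : Fin 3) : VMState N Ne Nb →L[ℝ] ℝ :=
  (ContinuousLinearMap.proj i : (Fin 3 → ℝ) →L[ℝ] ℝ).comp
    ((ContinuousLinearMap.proj s : (Fin N → Fin 3 → ℝ) →L[ℝ] (Fin 3 → ℝ)).comp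
      (ContinuousLinearMap.fst ℝ (Fin N → Fin 3 → ℝ)
        ((Fin N → Fin 3 → ℝ) × (Fin Ne → ℝ) × (Fin Nb → ℝ))))

noncomputable def cV (s : Fin N) (i : Fin 3) : VMState N Ne Nb →L[ℝ] ℝ :=
  (ContinuousLinearMap.proj i : (Fin 3 → ℝ) →L[ℝ] ℝ).comp
    ((ContinuousLinearMap.proj s : (Fin N → Fin 3 → ℝ) →L[ℝ] (Fin 3 → ℝ)).comp
      ((ContinuousLinearMap.fst ℝ (Fin N → Fin 3 → ℝ) ((Fin Ne → ℝ) × (Fin Nb → ℝ))).comp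
        (ContinuousLinearMap.snd ℝ (Fin N → Fin 3 → ℝ)
          ((Fin N → Fin 3 → ℝ) × (Fin Ne → ℝ) × (Fin Nb → ℝ)))))

noncomputable def cE (i : Fin Ne) : VMState N Ne Nb →L[ℝ] ℝ :=
  (ContinuousLinearMap.proj i : (Fin Ne → ℝ) →L[ℝ] ℝ).comp
    ((ContinuousLinearMap.fst ℝ (Fin Ne → ℝ) (Fin Nb → ℝ)).comp
      ((ContinuousLinearMap.snd ℝ (Fin N → Fin 3 → ℝ) ((Fin Ne → ℝ) × (Fin Nb → ℝ))).comp
        (ContinuousLinearMap.snd ℝ (Fin N → Fin 3 → ℝ)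
          ((Fin N → Fin 3 → ℝ) × (Fin Ne → ℝ) × (Fin Nb → ℝ)))))

noncomputable def cB (i : Fin Nb) : VMState N Ne Nb →L[ℝ] ℝ :=
  (ContinuousLinearMap.proj i : (Fin Nb → ℝ) →L[ℝ] ℝ).comp
    ((ContinuousLinearMap.snd ℝ (Fin Ne → ℝ) (Fin Nb → ℝ)).comp
      ((ContinuousLinearMap.snd ℝ (Fin N → Fin 3 → ℝ) ((Fin Ne → ℝ) × (Fin Nb → ℝ))).comp
        (ContinuousLinearMap.snd ℝ (Fin N → Fin 3 → ℝ)
          ((Fin N → Fin 3 → ℝ) × (Fin Ne → ℝ) × (Fin Nb → ℝ)))))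

@[simp] lemma cX_apply (s : Fin N) (i : Fin 3) (w : VMState N Ne Nb) : cX s i w = w.1 s i := rfl
@[simp] lemma cV_apply (s : Fin N) (i : Fin 3) (w : VMState N Ne Nb) : cV s i w = w.2.1 s i := rfl
@[simp] lemma cE_apply (i : Fin Ne) (w : VMState N Ne Nb) : cE (N:=N) (Nb:=Nb) i w = w.2.2.1 i := rfl
@[simp] lemma cB_apply (i : Fin Nb) (w : VMState N Ne Nb) : cB (N:=N) (Ne:=Ne) i w = w.2.2.2 i := rfl

lemma hX (s : Fin N) (i : Fin 3) (z : VMState N Ne Nb) :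
    HasFDerivAt (fun y : VMState N Ne Nb => y.1 s i) (cX s i) z := (cX s i).hasFDerivAt
lemma hV (s : Fin N) (i : Fin 3) (z : VMState N Ne Nb) :
    HasFDerivAt (fun y : VMState N Ne Nb => y.2.1 s i) (cV s i) z := (cV s i).hasFDerivAt
lemma hE (i : Fin Ne) (z : VMState N Ne Nb) :
    HasFDerivAt (fun y : VMState N Ne Nb => y.2.2.1 i) (cE i) z := (cE i).hasFDerivAt
lemma hB (i : Fin Nb) (z : VMState N Ne Nb) :
    HasFDerivAt (fun y : VMState N Ne Nb => y.2.2.2 i) (cB i) z := (cB i).hasFDerivAt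

lemma fderiv_coordX (s : Fin N) (i : Fin 3) (z w : VMState N Ne Nb) :
    fderiv ℝ (fun y : VMState N Ne Nb => y.1 s i) z w = w.1 s i := by
  rw [(hX s i z).fderiv]; rfl
lemma fderiv_coordV (s : Fin N) (i : Fin 3) (z w : VMState N Ne Nb) :
    fderiv ℝ (fun y : VMState N Ne Nb => y.2.1 s i) z w = w.2.1 s i := by
  rw [(hV s i z).fderiv]; rfl
lemma fderiv_coordE (i : Fin Ne) (z w : VMState N Ne Nb) :
    fderiv ℝ (fun y : VMState N Ne Nb => y.2.2.1 i) z w = w.2.2.1 i := by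
  rw [(hE i z).fderiv]; rfl
lemma fderiv_coordB (i : Fin Nb) (z w : VMState N Ne Nb) :
    fderiv ℝ (fun y : VMState N Ne Nb => y.2.2.2 i) z w = w.2.2.2 i := by
  rw [(hB i z).fderiv]; rfl

end AuxCLM
section AuxH
variable {N Ne Nb : ℕ} (ω : Fin N → ℝ)
  (We : Matrix (Fin Ne) (Fin Ne) ℝ) (Wb : Matrix (Fin Nb) (Fin Nb) ℝ)
  (z : VMState N Ne Nb)

/-- explicit derivative of the Hamiltonian -/
noncomputable def DH : VMState N Ne Nb →L[ℝ] ℝ :=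
  ((1:ℝ)/2) • (∑ s, ω s • ∑ i, (z.2.1 s i • cV s i + z.2.1 s i • cV s i))
  + ((1:ℝ)/2) • (∑ i, (z.2.2.1 i • ∑ j, We i j • cE j + (∑ j, We i j * z.2.2.1 j) • cE i))
  + ((1:ℝ)/2) • (∑ i, (z.2.2.2 i • ∑ j, Wb i j • cB j + (∑ j, Wb i j * z.2.2.2 j) • cB i))

lemma hasFDerivAt_H : HasFDerivAt (discreteH ω We Wb) (DH ω We Wb z) z := by
  have h1 : HasFDerivAt
      (fun y : VMState N Ne Nb => ∑ s, ω s * ∑ i, y.2.1 s i * y.2.1 s i)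
      (∑ s, ω s • ∑ i, (z.2.1 s i • cV s i + z.2.1 s i • cV s i)) z :=
    HasFDerivAt.fun_sum fun s _ =>
      (HasFDerivAt.fun_sum fun i _ => (hV s i z).mul (hV s i z)).const_mul (ω s)
  have h2 : HasFDerivAt
      (fun y : VMState N Ne Nb => ∑ i, y.2.2.1 i * ∑ j, We i j * y.2.2.1 j)
      (∑ i, (z.2.2.1 i • ∑ j, We i j • cE j + (∑ j, We i j * z.2.2.1 j) • cE i)) z :=
    HasFDerivAt.fun_sum fun i _ =>
      (hE i z).mul (HasFDerivAt.fun_sum fun j _ => (hE j z).const_mul (We i j))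
  have h3 : HasFDerivAt
      (fun y : VMState N Ne Nb => ∑ i, y.2.2.2 i * ∑ j, Wb i j * y.2.2.2 j)
      (∑ i, (z.2.2.2 i • ∑ j, Wb i j • cB j + (∑ j, Wb i j * z.2.2.2 j) • cB i)) z :=
    HasFDerivAt.fun_sum fun i _ =>
      (hB i z).mul (HasFDerivAt.fun_sum fun j _ => (hB j z).const_mul (Wb i j))
  have := ((h1.const_mul ((1:ℝ)/2)).add (h2.const_mul ((1:ℝ)/2))).add
    (h3.const_mul ((1:ℝ)/2))
  exact this

lemma fderiv_H_apply (w : VMState N Ne Nb) :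
    fderiv ℝ (discreteH ω We Wb) z w =
      (1/2) * ∑ s, ω s * ∑ i, (z.2.1 s i * w.2.1 s i + z.2.1 s i * w.2.1 s i)
      + (1/2) * ∑ i, (z.2.2.1 i * ∑ j, We i j * w.2.2.1 j
          + (∑ j, We i j * z.2.2.1 j) * w.2.2.1 i)
      + (1/2) * ∑ i, (z.2.2.2 i * ∑ j, Wb i j * w.2.2.2 j
          + (∑ j, Wb i j * z.2.2.2 j) * w.2.2.2 i) := by
  rw [(hasFDerivAt_H ω We Wb z).fderiv]
  simp [DH, ContinuousLinearMap.sum_apply, mul_comm]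

end AuxH
section AuxP
variable {N Ne Nb : ℕ} (ω : Fin N → ℝ)
  (We : Matrix (Fin Ne) (Fin Ne) ℝ) (Wb : Matrix (Fin Nb) (Fin Nb) ℝ)
  (z : VMState N Ne Nb)

lemma pX_H (s : Fin N) : pX (discreteH ω We Wb) z s = 0 := by
  funext i; simp [pX, fderiv_H_apply]

lemma pV_H (s : Fin N) : pV (discreteH ω We Wb) z s = fun i => ω s * z.2.1 s i := by
  funext i
  simp only [pV, fderiv_H_apply, Pi.zero_apply, mul_zero, zero_mul, add_zero, zero_add,
    Finset.sum_const_zero]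
  have hinner : ∀ t, (ω t * ∑ j, (z.2.1 t j * (Pi.single s (Pi.single i (1:ℝ)) : Fin N → Fin 3 → ℝ) t j
      + z.2.1 t j * (Pi.single s (Pi.single i (1:ℝ)) : Fin N → Fin 3 → ℝ) t j))
      = if t = s then 2 * (ω s * z.2.1 s i) else 0 := by
    intro t
    by_cases h : t = s
    · subst h
      simp [Pi.single_apply, mul_ite, mul_zero, Finset.sum_add_distrib, Finset.sum_ite_eq']
      ring
    · simp [Pi.single_eq_of_ne h, h]
  rw [Finset.sum_congr rfl fun t _ => hinner t]
  simp [Finset.sum_ite_eq']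

lemma pE_H (hWeSym : Weᵀ = We) : pE (discreteH ω We Wb) z = We.mulVec z.2.2.1 := by
  funext k
  have hsym : ∀ i j, We i j = We j i := fun i j => by
    rw [show We i j = Weᵀ j i from rfl, hWeSym]
  simp only [pE, fderiv_H_apply, Pi.zero_apply, mul_zero, zero_mul, add_zero, zero_add,
    Finset.sum_const_zero]
  have hinner : ∀ i, (z.2.2.1 i * ∑ j, We i j * ((Pi.single k (1:ℝ) : Fin Ne → ℝ)) j
      + (∑ j, We i j * z.2.2.1 j) * ((Pi.single k (1:ℝ) : Fin Ne → ℝ)) i)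
      = We k i * z.2.2.1 i + (if i = k then ∑ j, We k j * z.2.2.1 j else 0) := by
    intro i
    by_cases h : i = k
    · subst h
      simp [Pi.single_apply, mul_ite, mul_zero, Finset.sum_ite_eq']
      ring
    · simp [Pi.single_apply, h, mul_ite, mul_zero, Finset.sum_ite_eq']
      rw [hsym i k]; ring
  rw [Finset.sum_congr rfl fun i _ => hinner i, Finset.sum_add_distrib]
  simp [Finset.sum_ite_eq', mulVec, dotProduct]
  ring

lemma pB_H (hWbSym : Wbᵀ = Wb) : pB (discreteH ω We Wb) z = Wb.mulVec z.2.2.2 := by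
  funext k
  have hsym : ∀ i j, Wb i j = Wb j i := fun i j => by
    rw [show Wb i j = Wbᵀ j i from rfl, hWbSym]
  simp only [pB, fderiv_H_apply, Pi.zero_apply, mul_zero, zero_mul, add_zero, zero_add,
    Finset.sum_const_zero]
  have hinner : ∀ i, (z.2.2.2 i * ∑ j, Wb i j * ((Pi.single k (1:ℝ) : Fin Nb → ℝ)) j
      + (∑ j, Wb i j * z.2.2.2 j) * ((Pi.single k (1:ℝ) : Fin Nb → ℝ)) i)
      = Wb k i * z.2.2.2 i + (if i = k then ∑ j, Wb k j * z.2.2.2 j else 0) := by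
    intro i
    by_cases h : i = k
    · subst h
      simp [Pi.single_apply, mul_ite, mul_zero, Finset.sum_ite_eq']
      ring
    · simp [Pi.single_apply, h, mul_ite, mul_zero, Finset.sum_ite_eq']
      rw [hsym i k]; ring
  rw [Finset.sum_congr rfl fun i _ => hinner i, Finset.sum_add_distrib]
  simp [Finset.sum_ite_eq', mulVec, dotProduct]
  ring

-- coordinate functions
lemma pX_X (s t : Fin N) (i : Fin 3) :
    pX (fun y : VMState N Ne Nb => y.1 s i) z t = (Pi.single s (Pi.single i (1:ℝ)) : Fin N → Fin 3 → ℝ) t := by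
  funext j
  simp only [pX, fderiv_coordX]
  by_cases h1 : t = s <;> by_cases h2 : j = i <;>
    simp [h1, h2, Pi.single_apply, apply_ite]
lemma pV_X (s t : Fin N) (i : Fin 3) :
    pV (fun y : VMState N Ne Nb => y.1 s i) z t = 0 := by
  funext j; simp [pV, fderiv_coordX]
lemma pE_X (s : Fin N) (i : Fin 3) :
    pE (fun y : VMState N Ne Nb => y.1 s i) z = 0 := by
  funext j; simp [pE, fderiv_coordX]
lemma pB_X (s : Fin N) (i : Fin 3) :
    pB (fun y : VMState N Ne Nb => y.1 s i) z = 0 := by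
  funext j; simp [pB, fderiv_coordX]

lemma pV_V (s t : Fin N) (i : Fin 3) :
    pV (fun y : VMState N Ne Nb => y.2.1 s i) z t = (Pi.single s (Pi.single i (1:ℝ)) : Fin N → Fin 3 → ℝ) t := by
  funext j
  simp only [pV, fderiv_coordV]
  by_cases h1 : t = s <;> by_cases h2 : j = i <;>
    simp [h1, h2, Pi.single_apply, apply_ite]
lemma pX_V (s t : Fin N) (i : Fin 3) :
    pX (fun y : VMState N Ne Nb => y.2.1 s i) z t = 0 := by
  funext j; simp [pX, fderiv_coordV]
lemma pE_V (s : Fin N) (i : Fin 3) :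
    pE (fun y : VMState N Ne Nb => y.2.1 s i) z = 0 := by
  funext j; simp [pE, fderiv_coordV]
lemma pB_V (s : Fin N) (i : Fin 3) :
    pB (fun y : VMState N Ne Nb => y.2.1 s i) z = 0 := by
  funext j; simp [pB, fderiv_coordV]

lemma pE_E (k : Fin Ne) :
    pE (fun y : VMState N Ne Nb => y.2.2.1 k) z = Pi.single k (1:ℝ) := by
  funext j; simp [pE, fderiv_coordE, Pi.single_apply, eq_comm]
lemma pX_E (k : Fin Ne) (t : Fin N) :
    pX (fun y : VMState N Ne Nb => y.2.2.1 k) z t = 0 := by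
  funext j; simp [pX, fderiv_coordE]
lemma pV_E (k : Fin Ne) (t : Fin N) :
    pV (fun y : VMState N Ne Nb => y.2.2.1 k) z t = 0 := by
  funext j; simp [pV, fderiv_coordE]
lemma pB_E (k : Fin Ne) :
    pB (fun y : VMState N Ne Nb => y.2.2.1 k) z = 0 := by
  funext j; simp [pB, fderiv_coordE]

lemma pB_B (k : Fin Nb) :
    pB (fun y : VMState N Ne Nb => y.2.2.2 k) z = Pi.single k (1:ℝ) := by
  funext j; simp [pB, fderiv_coordB, Pi.single_apply, eq_comm]
lemma pX_B (k : Fin Nb) (t : Fin N) :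
    pX (fun y : VMState N Ne Nb => y.2.2.2 k) z t = 0 := by
  funext j; simp [pX, fderiv_coordB]
lemma pV_B (k : Fin Nb) (t : Fin N) :
    pV (fun y : VMState N Ne Nb => y.2.2.2 k) z t = 0 := by
  funext j; simp [pV, fderiv_coordB]
lemma pE_B (k : Fin Nb) :
    pE (fun y : VMState N Ne Nb => y.2.2.2 k) z = 0 := by
  funext j; simp [pE, fderiv_coordB]

end AuxP
lemma triple_cross (v w : Fin 3 → ℝ) (i : Fin 3) :
    w ⬝ᵥ (crossProduct (Pi.single i (1:ℝ))) v = (crossProduct v) w i := by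
  fin_cases i <;>
    simp [cross_apply, dotProduct, Fin.sum_univ_three, Pi.single_apply] <;> ring

theorem coordinate_equations_of_bracket {N Ne Nb : ℕ} (ω : Fin N → ℝ)
    (hω : ∀ s, 0 < ω s)
    (We : Matrix (Fin Ne) (Fin Ne) ℝ) (Wb : Matrix (Fin Nb) (Fin Nb) ℝ)
    (K : Matrix (Fin Ne) (Fin Nb) ℝ)
    (hWeSym : Weᵀ = We) (hWbSym : Wbᵀ = Wb)
    (hWePD : We.PosDef) (hWbPD : Wb.PosDef)
    (WeS : (Fin 3 → ℝ) → Matrix (Fin Ne) (Fin 3) ℝ)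
    (WbS : (Fin 3 → ℝ) → Matrix (Fin Nb) (Fin 3) ℝ)
    (hWeS : ∀ i j, ContDiff ℝ (⊤ : ℕ∞) (fun x => WeS x i j))
    (hWbS : ∀ i j, ContDiff ℝ (⊤ : ℕ∞) (fun x => WbS x i j))
    (z : VMState N Ne Nb) :
    -- Ẋₛ = Vₛ
    (∀ s i, discreteBracket ω We Wb K WeS WbS (fun y => y.1 s i)
        (discreteH ω We Wb) z = z.2.1 s i) ∧
    -- V̇ₛ = WeS(Xₛ)ᵀ E + Vₛ × (WbS(Xₛ)ᵀ B)
    (∀ s i, discreteBracket ω We Wb K WeS WbS (fun y => y.2.1 s i)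
        (discreteH ω We Wb) z
      = ((WeS (z.1 s))ᵀ.mulVec z.2.2.1
          + crossProduct (z.2.1 s) ((WbS (z.1 s))ᵀ.mulVec z.2.2.2)) i) ∧
    -- Ė = We⁻¹ (K B − Σₛ ωₛ WeS(Xₛ) Vₛ)
    (∀ j, discreteBracket ω We Wb K WeS WbS (fun y => y.2.2.1 j)
        (discreteH ω We Wb) z
      = (We⁻¹.mulVec (K.mulVec z.2.2.2
          - ∑ s, ω s • (WeS (z.1 s)).mulVec (z.2.1 s))) j) ∧
    -- Ḃ = −Wb⁻¹ Kᵀ E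
    (∀ j, discreteBracket ω We Wb K WeS WbS (fun y => y.2.2.2 j)
        (discreteH ω We Wb) z
      = (-(Wb⁻¹ * Kᵀ).mulVec z.2.2.1) j) := by

  have hωne : ∀ s, ω s ≠ 0 := fun s => (hω s).ne'
  have hWeDet : IsUnit We.det := isUnit_iff_ne_zero.2 hWePD.det_pos.ne'
  have hWbDet : IsUnit Wb.det := isUnit_iff_ne_zero.2 hWbPD.det_pos.ne'
  have hWeInv : We * We⁻¹ = 1 := We.mul_nonsing_inv hWeDet
  have hWbInv : Wb⁻¹ * Wb = 1 := Wb.nonsing_inv_mul hWbDet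
  have hWeMV : We *ᵥ z.2.2.1 = z.2.2.1 ᵥ* We := by
    conv_rhs => rw [← hWeSym]
    rw [vecMul_transpose]
  refine ⟨?_, ?_, ?_, ?_⟩
  · -- Ẋ = V
    intro s i
    simp only [discreteBracket, pX_X, pV_X, pE_X, pB_X, pX_H, pV_H,
      pE_H ω We Wb z hWeSym, pB_H ω We Wb z hWbSym]
    simp only [Matrix.mulVec_zero, dotProduct_zero, zero_dotProduct,
      map_zero, LinearMap.zero_apply, mul_zero, zero_mul, sub_zero, zero_sub,
      add_zero, zero_add, Finset.sum_const_zero, neg_zero, sub_self]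
    rw [Finset.sum_eq_single s (fun t _ ht => by simp [Pi.single_eq_of_ne ht])
      (fun h => absurd (Finset.mem_univ s) h)]
    simp [Pi.single_eq_same, single_dotProduct]
    rw [inv_mul_cancel_left₀ (hωne s)]
  · -- V̇
    intro s i
    simp only [discreteBracket, pX_V, pV_V, pE_V, pB_V, pX_H, pV_H,
      pE_H ω We Wb z hWeSym, pB_H ω We Wb z hWbSym]
    simp only [Matrix.mulVec_zero, dotProduct_zero, zero_dotProduct,
      map_zero, LinearMap.zero_apply, mul_zero, zero_mul, sub_zero, zero_sub,
      add_zero, zero_add, Finset.sum_const_zero, neg_zero, sub_self]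
    rw [Finset.sum_eq_single s (fun t _ ht => by simp [Pi.single_eq_of_ne ht])
      (fun h => absurd (Finset.mem_univ s) h),
      Finset.sum_eq_single s (fun t _ ht => by simp [Pi.single_eq_of_ne ht])
      (fun h => absurd (Finset.mem_univ s) h)]
    simp only [Pi.single_eq_same]
    rw [show (fun j => ω s * z.2.1 s j) = ω s • z.2.1 s from rfl, _root_.map_smul,
      Matrix.mulVec_smul, dotProduct_smul, smul_eq_mul,
      Matrix.dotProduct_mulVec (We *ᵥ z.2.2.1), hWeMV,
      Matrix.vecMul_vecMul, ← Matrix.mul_assoc, hWeInv, Matrix.one_mul,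
      dotProduct_single,
      Matrix.dotProduct_mulVec z.2.2.2, ← Matrix.mulVec_transpose, triple_cross]
    rw [mul_one, one_div, inv_mul_cancel_left₀ (hωne s), Pi.add_apply,
      Matrix.mulVec_transpose, Matrix.mulVec_transpose]
  · -- Ė
    intro j
    simp only [discreteBracket, pX_E, pV_E, pE_E, pB_E, pX_H, pV_H,
      pE_H ω We Wb z hWeSym, pB_H ω We Wb z hWbSym]
    simp only [Matrix.mulVec_zero, dotProduct_zero, zero_dotProduct,
      map_zero, LinearMap.zero_apply, mul_zero, zero_mul, sub_zero, zero_sub,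
      add_zero, zero_add, Finset.sum_const_zero, neg_zero, sub_self]
    have hterm : ∀ x, -(Pi.single j (1:ℝ) ⬝ᵥ (We⁻¹ * WeS (z.1 x)) *ᵥ fun i => ω x * z.2.1 x i)
        = -(ω x * (We⁻¹ *ᵥ (WeS (z.1 x) *ᵥ z.2.1 x)) j) := by
      intro x
      rw [show (fun i => ω x * z.2.1 x i) = ω x • z.2.1 x from rfl, Matrix.mulVec_smul,
        dotProduct_smul, single_dotProduct, ← Matrix.mulVec_mulVec,
        smul_eq_mul, one_mul]
    rw [Finset.sum_congr rfl fun x _ => hterm x, single_dotProduct, one_mul,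
      Matrix.mulVec_mulVec, Matrix.mul_assoc (We⁻¹ * K) Wb⁻¹ Wb, hWbInv, Matrix.mul_one,
      ← Matrix.mulVec_mulVec, Matrix.mulVec_sub]
    have hsum : We⁻¹ *ᵥ (∑ s, ω s • WeS (z.1 s) *ᵥ z.2.1 s)
        = ∑ s, ω s • (We⁻¹ *ᵥ (WeS (z.1 s) *ᵥ z.2.1 s)) := by
      simp only [← Matrix.mulVecLin_apply, map_sum, _root_.map_smul]
    rw [hsum, Pi.sub_apply, Finset.sum_apply]
    simp only [Pi.smul_apply, smul_eq_mul]
    rw [Finset.sum_neg_distrib]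
    ring
  · -- Ḃ
    intro j
    simp only [discreteBracket, pX_B, pV_B, pE_B, pB_B, pX_H, pV_H,
      pE_H ω We Wb z hWeSym, pB_H ω We Wb z hWbSym]
    simp only [Matrix.mulVec_zero, dotProduct_zero, zero_dotProduct,
      map_zero, LinearMap.zero_apply, mul_zero, zero_mul, sub_zero, zero_sub,
      add_zero, zero_add, Finset.sum_const_zero, neg_zero, sub_self]
    have hT : Wb⁻¹ * Kᵀ = (K * Wb⁻¹)ᵀ := by
      rw [transpose_mul, Matrix.transpose_nonsing_inv, hWbSym]
    rw [Matrix.dotProduct_mulVec, hWeMV, Matrix.vecMul_vecMul,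
      ← Matrix.mul_assoc We (We⁻¹ * K) Wb⁻¹, ← Matrix.mul_assoc We We⁻¹ K, hWeInv,
      Matrix.one_mul, dotProduct_single, mul_one, hT, Matrix.mulVec_transpose,
      Pi.neg_apply]
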